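/- arXiv:1201.5494 — 3 statements merged into one kernel-verified Lean document; each statement's English description precedes it below -/
import Mathlib

section
/- (Derivative bound from the proof of Lemma 2.) If λ > 0, s = √λ and s ≥ 2q₁, then the derivative of the solution w₁(·,λ) satisfies |w₁′(x,λ)| ≤ √2·s + 2√2·q₁ for all x ∈ [0,π/2]. -/
/-!
With `F = √(λ y² + p² y'² + ε)`, the equation gives `F' = -y' q(x) y(x - Δ x) / F`, and
`p |y'| ≤ F`, `√λ |y| ≤ F` bound `|F'|` by `|q| · max F / (p √λ)`. Integrating,
`F ≤ F 0 + (q₁/√λ) · max F`; since `q₁/√λ ≤ 1/2` this forces `max F ≤ 2 F 0`, hence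
`p |y'| ≤ F ≤ F 0 (1 + 2 q₁/√λ)`. Let `ε → 0`; the initial data give `F 0 = √2 √λ p`.
-/

open Set Filter Topology MeasureTheory intervalIntegral

noncomputable section

theorem integrableOn_Icc_of_continuousOn_Ico_of_tendsto {E : Type*} [NormedAddCommGroup E]
    {f : ℝ → E} {a b : ℝ} {L : E} (hab : a < b) (hf : ContinuousOn f (Ico a b))
    (hb : Tendsto f (𝓝[<] b) (𝓝 L)) : IntegrableOn f (Icc a b) := by
  have hf' : ContinuousOn f (Ioo a b) := hf.mono Ioo_subset_Ico_self
  have ha : Tendsto f (𝓝[>] a) (𝓝 (f a)) := by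
    rw [← nhdsWithin_Ioo_eq_nhdsGT hab]
    exact (hf a ⟨le_rfl, hab⟩).tendsto.mono_left (nhdsWithin_mono _ Ioo_subset_Ico_self)
  have hext := (continuousOn_Icc_extendFrom_Ioo hf' ha hb).integrableOn_Icc (μ := volume)
  rw [integrableOn_Icc_iff_integrableOn_Ioo] at hext ⊢
  exact hext.congr_fun (extendFrom_extends hf') measurableSet_Ioo

/-- The regularisation `ε > 0` keeps the radicand positive, so that the square root is
differentiable. -/
def sqrtEnergy (lam p ε : ℝ) (u v : ℝ → ℝ) (t : ℝ) : ℝ :=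
  √(lam * u t ^ 2 + p ^ 2 * v t ^ 2 + ε)

section sqrtEnergy

variable {lam p ε : ℝ} {u v w q r : ℝ → ℝ}

theorem mul_abs_le_sqrtEnergy (hp : 0 ≤ p) (hlam : 0 ≤ lam) (hε : 0 ≤ ε) (t : ℝ) :
    p * |v t| ≤ sqrtEnergy lam p ε u v t := by
  calc p * |v t| = |p * v t| := by rw [abs_mul, abs_of_nonneg hp]
    _ ≤ _ := Real.abs_le_sqrt (by nlinarith [mul_nonneg hlam (sq_nonneg (u t))])

theorem sqrt_mul_abs_le_sqrtEnergy (hlam : 0 ≤ lam) (hε : 0 ≤ ε) (t : ℝ) :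
    √lam * |u t| ≤ sqrtEnergy lam p ε u v t := by
  have h : (√lam * u t) ^ 2 = lam * u t ^ 2 := by rw [mul_pow, Real.sq_sqrt hlam]
  calc √lam * |u t| = |√lam * u t| := by rw [abs_mul, abs_of_nonneg (Real.sqrt_nonneg lam)]
    _ ≤ _ := Real.abs_le_sqrt (by nlinarith [sq_nonneg (p * v t)])

theorem sqrtEnergy_pos (hlam : 0 ≤ lam) (hε : 0 < ε) (t : ℝ) : 0 < sqrtEnergy lam p ε u v t :=
  Real.sqrt_pos.mpr (by positivity)

theorem hasDerivAt_sqrtEnergy {t : ℝ} (hlam : 0 ≤ lam) (hε : 0 < ε)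
    (hu : HasDerivAt u (v t) t) (hv : HasDerivAt v (w t) t)
    (hode : p ^ 2 * w t + q t * u (r t) + lam * u t = 0) :
    HasDerivAt (sqrtEnergy lam p ε u v)
      (-(v t * q t * u (r t)) / sqrtEnergy lam p ε u v t) t := by
  have hE : HasDerivAt (fun y => lam * u y ^ 2 + p ^ 2 * v y ^ 2 + ε)
      (lam * (2 * u t * v t) + p ^ 2 * (2 * v t * w t)) t := by
    simpa using
      (((hu.fun_pow 2).const_mul lam).fun_add ((hv.fun_pow 2).const_mul (p ^ 2))).add_const ε
  refine (hE.sqrt (by positivity)).congr_deriv ?_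
  rw [show lam * (2 * u t * v t) + p ^ 2 * (2 * v t * w t) = 2 * -(v t * q t * u (r t)) by
    linear_combination 2 * v t * hode]
  exact mul_div_mul_left _ _ two_ne_zero

theorem continuousOn_sqrtEnergy {s : Set ℝ} (hu : ContinuousOn u s) (hv : ContinuousOn v s) :
    ContinuousOn (sqrtEnergy lam p ε u v) s := by
  unfold sqrtEnergy
  fun_prop

theorem sqrtEnergy_sub_le {a b M : ℝ} (hab : a ≤ b) (hlam : 0 < lam) (hp : 0 < p) (hε : 0 < ε)
    (hu : ∀ t ∈ Icc a b, HasDerivAt u (v t) t) (hv : ∀ t ∈ Icc a b, HasDerivAt v (w t) t)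
    (hode : ∀ t ∈ Ioo a b, p ^ 2 * w t + q t * u (r t) + lam * u t = 0)
    (hM : ∀ t ∈ Ioo a b, sqrtEnergy lam p ε u v (r t) ≤ M) (hq : IntegrableOn q (Icc a b)) :
    sqrtEnergy lam p ε u v b - sqrtEnergy lam p ε u v a ≤
      (∫ t in a..b, |q t|) * (M / (p * √lam)) := by
  set F := sqrtEnergy lam p ε u v
  rw [← intervalIntegral.integral_mul_const]
  refine sub_le_integral_of_hasDeriv_right_of_le hab
    (continuousOn_sqrtEnergy (fun t ht => (hu t ht).continuousAt.continuousWithinAt)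
      (fun t ht => (hv t ht).continuousAt.continuousWithinAt))
    (fun t ht => (hasDerivAt_sqrtEnergy hlam.le hε (hu t (Ioo_subset_Icc_self ht))
      (hv t (Ioo_subset_Icc_self ht)) (hode t ht)).hasDerivWithinAt)
    (hq.abs.mul_const _) (fun t ht => ?_)
  have hFt : 0 < F t := sqrtEnergy_pos hlam.le hε t
  have hvt : |v t| ≤ F t / p := by
    rw [le_div_iff₀ hp, mul_comm]
    exact mul_abs_le_sqrtEnergy hp.le hlam.le hε.le t
  have hut : |u (r t)| ≤ M / √lam := by
    rw [le_div_iff₀ (Real.sqrt_pos.2 hlam), mul_comm]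
    exact (sqrt_mul_abs_le_sqrtEnergy hlam.le hε.le _).trans (hM t ht)
  calc -(v t * q t * u (r t)) / F t ≤ |v t| * |q t| * |u (r t)| / F t := by
        gcongr
        rw [← abs_mul, ← abs_mul]
        exact neg_le_abs _
    _ ≤ F t / p * |q t| * (M / √lam) / F t := by gcongr
    _ = |q t| * (M / (p * √lam)) := by field_simp

theorem sqrtEnergy_le_of_delayODE {b : ℝ} (hb : 0 ≤ b) (hlam : 0 < lam) (hp : 0 < p)
    (hε : 0 < ε)
    (hu : ∀ t ∈ Icc 0 b, HasDerivAt u (v t) t) (hv : ∀ t ∈ Icc 0 b, HasDerivAt v (w t) t)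
    (hode : ∀ t ∈ Ioo 0 b, p ^ 2 * w t + q t * u (r t) + lam * u t = 0)
    (hr : MapsTo r (Ioo 0 b) (Icc 0 b)) (hq : IntegrableOn q (Icc 0 b))
    (hsmall : 2 * ∫ t in 0..b, |q t| ≤ p * √lam) :
    ∀ x ∈ Icc 0 b, sqrtEnergy lam p ε u v x ≤
      sqrtEnergy lam p ε u v 0 * (1 + 2 * (∫ t in 0..b, |q t|) / (p * √lam)) := by
  set F := sqrtEnergy lam p ε u v
  set K := (∫ t in 0..b, |q t|) / (p * √lam)
  have hpl : 0 < p * √lam := mul_pos hp (Real.sqrt_pos.2 hlam)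
  have hK0 : 0 ≤ K := div_nonneg (integral_nonneg hb fun _ _ => abs_nonneg _) hpl.le
  have hK : K ≤ 1 / 2 := by rw [div_le_iff₀ hpl]; linarith
  obtain ⟨c, hc, hmax⟩ := isCompact_Icc.exists_isMaxOn (nonempty_Icc.2 hb)
    (continuousOn_sqrtEnergy (fun t ht => (hu t ht).continuousAt.continuousWithinAt)
      (fun t ht => (hv t ht).continuousAt.continuousWithinAt) (lam := lam) (p := p) (ε := ε))
  have hgrowth : ∀ x ∈ Icc 0 b, F x ≤ F 0 + K * F c := by
    intro x hx
    have hsub : Icc 0 x ⊆ Icc 0 b := Icc_subset_Icc le_rfl hx.2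
    have hFx := sqrtEnergy_sub_le hx.1 hlam hp hε (fun t ht => hu t (hsub ht))
      (fun t ht => hv t (hsub ht)) (fun t ht => hode t ⟨ht.1, ht.2.trans_le hx.2⟩)
      (fun t ht => hmax (hr ⟨ht.1, ht.2.trans_le hx.2⟩)) (hq.mono_set hsub)
    have hQx : ∫ t in 0..x, |q t| ≤ ∫ t in 0..b, |q t| :=
      integral_mono_interval le_rfl hx.1 hx.2 (Eventually.of_forall fun _ => abs_nonneg _)
        ((intervalIntegrable_iff_integrableOn_Icc_of_le hb).2 (Integrable.abs hq))
    calc F x ≤ F 0 + (∫ t in 0..x, |q t|) * (F c / (p * √lam)) := by linarith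
      _ ≤ F 0 + (∫ t in 0..b, |q t|) * (F c / (p * √lam)) := by
        gcongr
        exact div_nonneg (sqrtEnergy_pos hlam.le hε c).le hpl.le
      _ = F 0 + K * F c := by ring
  -- the maximum satisfies `F c ≤ F 0 + F c / 2`
  have hFc : F c ≤ 2 * F 0 := by
    nlinarith [hgrowth c hc, sqrtEnergy_pos hlam.le hε c (p := p) (u := u) (v := v)]
  intro x hx
  calc F x ≤ F 0 + K * F c := hgrowth x hx
    _ ≤ F 0 + K * (2 * F 0) := by gcongr
    _ = F 0 * (1 + 2 * K) := by ring
    _ = _ := by rw [mul_div_assoc]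

theorem mul_abs_deriv_le_of_delayODE {b : ℝ} (hb : 0 ≤ b) (hlam : 0 < lam) (hp : 0 < p)
    (hu : ∀ t ∈ Icc 0 b, HasDerivAt u (v t) t) (hv : ∀ t ∈ Icc 0 b, HasDerivAt v (w t) t)
    (hode : ∀ t ∈ Ioo 0 b, p ^ 2 * w t + q t * u (r t) + lam * u t = 0)
    (hr : MapsTo r (Ioo 0 b) (Icc 0 b)) (hq : IntegrableOn q (Icc 0 b))
    (hsmall : 2 * ∫ t in 0..b, |q t| ≤ p * √lam) :
    ∀ x ∈ Icc 0 b, p * |v x| ≤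
      sqrtEnergy lam p 0 u v 0 * (1 + 2 * (∫ t in 0..b, |q t|) / (p * √lam)) := by
  intro x hx
  have hcont : Continuous fun ε => sqrtEnergy lam p ε u v 0 *
      (1 + 2 * (∫ t in 0..b, |q t|) / (p * √lam)) := by
    unfold sqrtEnergy
    fun_prop
  refine ge_of_tendsto ((hcont.tendsto 0).mono_left (nhdsWithin_le_nhds (s := Ioi 0))) ?_
  filter_upwards [self_mem_nhdsWithin] with ε hε
  exact (mul_abs_le_sqrtEnergy hp.le hlam.le hε.le x).trans
    (sqrtEnergy_le_of_delayODE hb hlam hp hε hu hv hode hr hq hsmall x hx)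

end sqrtEnergy

theorem stmt4_general
    (p1 : ℝ) (q Δ : ℝ → ℝ)
    (hp1 : 0 < p1)
    (hqc1 : ContinuousOn q (Set.Ico 0 (Real.pi/2)))
    (hqlim1 : ∃ L : ℝ, Filter.Tendsto q (nhdsWithin (Real.pi/2) (Set.Iio (Real.pi/2))) (nhds L))
    (hΔnonneg : ∀ x ∈ Set.Ico (0:ℝ) (Real.pi/2) ∪ Set.Ioc (Real.pi/2) Real.pi, 0 ≤ Δ x)
    (hret1 : ∀ x ∈ Set.Ico (0:ℝ) (Real.pi/2), 0 ≤ x - Δ x)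
    (w1 w1' w1'' : ℝ → ℝ → ℝ)
    (hw1d : ∀ lam : ℝ, 0 < lam → ∀ x ∈ Set.Icc (0:ℝ) (Real.pi/2),
      HasDerivAt (w1 lam) (w1' lam x) x ∧ HasDerivAt (w1' lam) (w1'' lam x) x)
    (hw1eq : ∀ lam : ℝ, 0 < lam → ∀ x ∈ Set.Icc (0:ℝ) (Real.pi/2),
      p1^2 * w1'' lam x + q x * w1 lam (x - Δ x) + lam * w1 lam x = 0)
    (hw1ic : ∀ lam : ℝ, 0 < lam → w1 lam 0 = p1 ∧ w1' lam 0 = -Real.sqrt lam)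
    (lam : ℝ) (hlam : 0 < lam)
    (hs : 2 * ((1/p1) * ∫ τ in (0:ℝ)..(Real.pi/2), |q τ|) ≤ Real.sqrt lam)
    :
    ∀ x ∈ Set.Icc (0:ℝ) (Real.pi/2),
      |w1' lam x| ≤ Real.sqrt 2 * Real.sqrt lam + 2 * Real.sqrt 2 * ((1/p1) * ∫ τ in (0:ℝ)..(Real.pi/2), |q τ|) := by
  intro x hx
  obtain ⟨L, hL⟩ := hqlim1
  have hq := integrableOn_Icc_of_continuousOn_Ico_of_tendsto (by positivity) hqc1 hL
  have hr : MapsTo (fun t => t - Δ t) (Ioo 0 (Real.pi / 2)) (Icc 0 (Real.pi / 2)) :=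
    fun t ht => ⟨hret1 t (Ioo_subset_Ico_self ht),
      by linarith [hΔnonneg t (Or.inl (Ioo_subset_Ico_self ht)), ht.2]⟩
  have hsmall : 2 * ∫ τ in (0:ℝ)..(Real.pi/2), |q τ| ≤ p1 * √lam := by
    calc _ = p1 * (2 * ((1 / p1) * ∫ τ in (0:ℝ)..(Real.pi/2), |q τ|)) := by field_simp
      _ ≤ p1 * √lam := by gcongr
  have hbound := mul_abs_deriv_le_of_delayODE (by positivity) hlam hp1
    (fun t ht => (hw1d lam hlam t ht).1) (fun t ht => (hw1d lam hlam t ht).2)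
    (fun t ht => hw1eq lam hlam t (Ioo_subset_Icc_self ht)) hr hq hsmall x hx
  have hinit : sqrtEnergy lam p1 0 (w1 lam) (w1' lam) 0 = √2 * √lam * p1 := by
    rw [sqrtEnergy, (hw1ic lam hlam).1, (hw1ic lam hlam).2, ← Real.sqrt_sq (by positivity :
      0 ≤ √2 * √lam * p1)]
    congr 1
    rw [mul_pow, mul_pow, Real.sq_sqrt two_pos.le, neg_sq, Real.sq_sqrt hlam.le]
    ring
  rw [hinit] at hbound
  refine le_of_mul_le_mul_left (hbound.trans_eq ?_) hp1
  field_simp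

theorem stmt4
    (p1 p2 γ1 γ2 δ1 δ2 d : ℝ) (q Δ : ℝ → ℝ)
    (hp1 : 0 < p1) (hp2 : 0 < p2)
    (hδ1 : δ1 ≠ 0) (hδ2 : δ2 ≠ 0)
    (hγδ : γ1 * δ2 * p1 = γ2 * δ1 * p2)
    (hqc1 : ContinuousOn q (Set.Ico 0 (Real.pi/2)))
    (hqc2 : ContinuousOn q (Set.Ioc (Real.pi/2) Real.pi))
    (hqlim1 : ∃ L : ℝ, Filter.Tendsto q (nhdsWithin (Real.pi/2) (Set.Iio (Real.pi/2))) (nhds L))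
    (hqlim2 : ∃ L : ℝ, Filter.Tendsto q (nhdsWithin (Real.pi/2) (Set.Ioi (Real.pi/2))) (nhds L))
    (hΔc1 : ContinuousOn Δ (Set.Ico 0 (Real.pi/2)))
    (hΔc2 : ContinuousOn Δ (Set.Ioc (Real.pi/2) Real.pi))
    (hΔlim1 : ∃ L : ℝ, Filter.Tendsto Δ (nhdsWithin (Real.pi/2) (Set.Iio (Real.pi/2))) (nhds L))
    (hΔlim2 : ∃ L : ℝ, Filter.Tendsto Δ (nhdsWithin (Real.pi/2) (Set.Ioi (Real.pi/2))) (nhds L))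
    (hΔnonneg : ∀ x ∈ Set.Ico (0:ℝ) (Real.pi/2) ∪ Set.Ioc (Real.pi/2) Real.pi, 0 ≤ Δ x)
    (hret1 : ∀ x ∈ Set.Ico (0:ℝ) (Real.pi/2), 0 ≤ x - Δ x)
    (hret2 : ∀ x ∈ Set.Ioc (Real.pi/2) Real.pi, Real.pi/2 ≤ x - Δ x)
    (w1 w1' w1'' : ℝ → ℝ → ℝ)
    (hw1d : ∀ lam : ℝ, 0 < lam → ∀ x ∈ Set.Icc (0:ℝ) (Real.pi/2),
      HasDerivAt (w1 lam) (w1' lam x) x ∧ HasDerivAt (w1' lam) (w1'' lam x) x)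
    (hw1eq : ∀ lam : ℝ, 0 < lam → ∀ x ∈ Set.Icc (0:ℝ) (Real.pi/2),
      p1^2 * w1'' lam x + q x * w1 lam (x - Δ x) + lam * w1 lam x = 0)
    (hw1ic : ∀ lam : ℝ, 0 < lam → w1 lam 0 = p1 ∧ w1' lam 0 = -Real.sqrt lam)
    (lam : ℝ) (hlam : 0 < lam)
    (hs : 2 * ((1/p1) * ∫ τ in (0:ℝ)..(Real.pi/2), |q τ|) ≤ Real.sqrt lam)
    :
    ∀ x ∈ Set.Icc (0:ℝ) (Real.pi/2),
      |w1' lam x| ≤ Real.sqrt 2 * Real.sqrt lam + 2 * Real.sqrt 2 * ((1/p1) * ∫ τ in (0:ℝ)..(Real.pi/2), |q τ|) :=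
  stmt4_general p1 q Δ hp1 hqc1 hqlim1 hΔnonneg hret1 w1 w1' w1'' hw1d hw1eq hw1ic lam hlam hs
end
end

section
/- (Lemma 2, part 2.) If λ ≥ max{4q₁², 4q₂²}, then the solution w₂(·,λ) satisfies |w₂(x,λ)| ≤ 4√2·p₁·( |γ₁/δ₁| + |p₂γ₂/(4p₁δ₂)| ) for all x ∈ [π/2,π]. -/
/-!
The complex amplitude `Z = (p w' - i √λ w) e^{i √λ x / p}` of `w` has `|Z|² = λ w² + p² w'²`
(the energy) and `Z' = ((p² w'' + λ w) / p) e^{i √λ x / p}`, so along the delay equation the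
energy moves by at most `(max |w| / p) ∫ |q| ≤ √λ max |w| / 2`. As `√λ |w| ≤ energy`, on each half
interval both `√λ max |w|` and the final energy are at most twice the initial energy. That is
`√2 √λ p₁` at `0`, and by `γ₁ δ₂ p₁ = γ₂ δ₁ p₂` the transmission conditions multiply the energy at
`π/2` by exactly `|γ₁ / δ₁|`.
-/

open Set Filter intervalIntegral MeasureTheory Topology

noncomputable section

def amplitude (p lam : ℝ) (w w' : ℝ → ℝ) (x : ℝ) : ℂ :=
  (p * w' x - √lam * w x * Complex.I) * Complex.exp (↑(√lam / p * x) * Complex.I)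

def energy (p lam : ℝ) (w w' : ℝ → ℝ) (x : ℝ) : ℝ :=
  √(lam * w x ^ 2 + p ^ 2 * w' x ^ 2)

section Energy

variable {p lam a b : ℝ} {w w' w'' : ℝ → ℝ}

lemma norm_amplitude (hlam : 0 ≤ lam) (x : ℝ) :
    ‖amplitude p lam w w' x‖ = energy p lam w w' x := by
  rw [amplitude, norm_mul, Complex.norm_exp_ofReal_mul_I, mul_one,
    Complex.norm_eq_sqrt_sq_add_sq, energy]
  congr 1
  simp only [Complex.sub_re, Complex.sub_im, Complex.mul_re, Complex.mul_im,
    Complex.ofReal_re, Complex.ofReal_im, Complex.I_re, Complex.I_im]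
  linear_combination (w x ^ 2) * Real.sq_sqrt hlam

lemma sqrt_mul_abs_le_energy (hlam : 0 ≤ lam) (x : ℝ) : √lam * |w x| ≤ energy p lam w w' x := by
  apply Real.le_sqrt_of_sq_le
  rw [mul_pow, Real.sq_sqrt hlam, sq_abs]
  nlinarith [sq_nonneg (p * w' x)]

lemma hasDerivAt_amplitude (hp : p ≠ 0) (hlam : 0 ≤ lam) {x : ℝ}
    (hw : HasDerivAt w (w' x) x) (hw' : HasDerivAt w' (w'' x) x) :
    HasDerivAt (amplitude p lam w w')
      (↑((p ^ 2 * w'' x + lam * w x) / p) * Complex.exp (↑(√lam / p * x) * Complex.I)) x := by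
  have hphase : HasDerivAt (fun y : ℝ => Complex.exp (↑(√lam / p * y) * Complex.I))
      (Complex.exp (↑(√lam / p * x) * Complex.I) * (↑(√lam / p) * Complex.I)) x := by
    have := ((((hasDerivAt_id x).const_mul (√lam / p)).ofReal_comp).mul_const Complex.I).cexp
    simpa using this
  have hfactor : HasDerivAt (fun y : ℝ => (p * w' y - √lam * w y * Complex.I : ℂ))
      (p * w'' x - √lam * w' x * Complex.I) x :=
    (hw'.ofReal_comp.const_mul (p : ℂ)).sub ((hw.ofReal_comp.const_mul (√lam : ℂ)).mul_const _)
  refine (hfactor.mul hphase).congr_deriv ?_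
  have hsq : (√lam : ℂ) ^ 2 = lam := by exact_mod_cast Real.sq_sqrt hlam
  have hp' : (p : ℂ) ≠ 0 := by exact_mod_cast hp
  push_cast
  field_simp
  linear_combination (w x : ℂ) * hsq - (√lam : ℂ) ^ 2 * (w x : ℂ) * Complex.I_sq

lemma energy_le_add_integral (hp : 0 < p) (hlam : 0 ≤ lam) (hab : a ≤ b) {g : ℝ → ℝ}
    (hd : ∀ x ∈ Icc a b, HasDerivAt w (w' x) x ∧ HasDerivAt w' (w'' x) x)
    (hg : ∀ s ∈ Ioo a b, |p ^ 2 * w'' s + lam * w s| ≤ g s)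
    (hgi : IntervalIntegrable g volume a b) :
    energy p lam w w' b ≤ energy p lam w w' a + (∫ s in a..b, g s) / p := by
  have hZ : ∀ x ∈ Icc a b, HasDerivAt (amplitude p lam w w')
      (↑((p ^ 2 * w'' x + lam * w x) / p) * Complex.exp (↑(√lam / p * x) * Complex.I)) x :=
    fun x hx => hasDerivAt_amplitude hp.ne' hlam (hd x hx).1 (hd x hx).2
  have hspeed : ∀ s ∈ Ioo a b, ‖deriv (amplitude p lam w w') s‖ ≤ g s / p := fun s hs => by
    rw [(hZ s (Ioo_subset_Icc_self hs)).deriv, norm_mul, Complex.norm_exp_ofReal_mul_I, mul_one,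
      Complex.norm_real, Real.norm_eq_abs, abs_div, abs_of_pos hp]
    exact div_le_div_of_nonneg_right (hg s hs) hp.le
  have hdisp := norm_sub_le_integral_of_norm_deriv_le_of_le hab
    (fun x hx => (hZ x hx).continuousAt.continuousWithinAt)
    (fun x hx => (hZ x (Ioo_subset_Icc_self hx)).differentiableAt.differentiableWithinAt)
    (ae_of_all _ hspeed) (hgi.div_const p)
  rw [intervalIntegral.integral_div] at hdisp
  rw [← norm_amplitude hlam, ← norm_amplitude hlam]
  linarith [norm_sub_norm_le (amplitude p lam w w' b) (amplitude p lam w w' a)]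

variable {k : ℝ → ℝ}

lemma energy_le_add_of_forcing_le (hp : 0 < p) (hlam : 0 ≤ lam) {C : ℝ} (hC : 0 ≤ C)
    (hd : ∀ x ∈ Icc a b, HasDerivAt w (w' x) x ∧ HasDerivAt w' (w'' x) x)
    (hk : IntervalIntegrable k volume a b) (hk0 : ∀ s, 0 ≤ k s)
    (hforce : ∀ s ∈ Ioo a b, |p ^ 2 * w'' s + lam * w s| ≤ k s * C)
    (hsmall : ∫ s in a..b, k s ≤ p * √lam / 2) {x : ℝ} (hx : x ∈ Icc a b) :
    energy p lam w w' x ≤ energy p lam w w' a + √lam * C / 2 := by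
  have hsub : uIcc a x ⊆ uIcc a b := uIcc_subset_uIcc_left (by rwa [uIcc_of_le (hx.1.trans hx.2)])
  have hkx : ∫ s in a..x, k s ≤ ∫ s in a..b, k s :=
    integral_mono_interval le_rfl hx.1 hx.2 (ae_of_all _ hk0) hk
  have hE := energy_le_add_integral hp hlam hx.1 (g := fun s => k s * C)
    (fun y hy => hd y ⟨hy.1, hy.2.trans hx.2⟩)
    (fun s hs => hforce s ⟨hs.1, hs.2.trans_le hx.2⟩) ((hk.mono_set hsub).mul_const C)
  have hint : (∫ s in a..x, k s * C) / p ≤ √lam * C / 2 := by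
    rw [intervalIntegral.integral_mul_const, div_le_iff₀ hp]
    nlinarith [mul_le_mul_of_nonneg_right (hkx.trans hsmall) hC]
  linarith

lemma sqrt_mul_abs_le_two_mul_energy (hp : 0 < p) (hlam : 0 ≤ lam) (hab : a ≤ b)
    (hd : ∀ x ∈ Icc a b, HasDerivAt w (w' x) x ∧ HasDerivAt w' (w'' x) x)
    (hk : IntervalIntegrable k volume a b) (hk0 : ∀ s, 0 ≤ k s)
    (hbound : ∀ s ∈ Ioo a b, ∃ t ∈ Icc a b, |p ^ 2 * w'' s + lam * w s| ≤ k s * |w t|)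
    (hsmall : ∫ s in a..b, k s ≤ p * √lam / 2) {x : ℝ} (hx : x ∈ Icc a b) :
    √lam * |w x| ≤ 2 * energy p lam w w' a := by
  obtain ⟨xm, hxm, hmax⟩ := isCompact_Icc.exists_isMaxOn ⟨a, left_mem_Icc.mpr hab⟩
    fun y hy => (hd y hy).1.continuousAt.continuousWithinAt.abs
  have hforce : ∀ s ∈ Ioo a b, |p ^ 2 * w'' s + lam * w s| ≤ k s * |w xm| := fun s hs => by
    obtain ⟨t, ht, hle⟩ := hbound s hs
    exact hle.trans (mul_le_mul_of_nonneg_left (hmax ht) (hk0 s))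
  have hEm := energy_le_add_of_forcing_le hp hlam (abs_nonneg _) hd hk hk0 hforce hsmall hxm
  have hxm_le := sqrt_mul_abs_le_energy (p := p) (w := w) (w' := w') hlam xm
  have hx_le : √lam * |w x| ≤ √lam * |w xm| := mul_le_mul_of_nonneg_left (hmax hx) (by positivity)
  linarith

lemma energy_le_two_mul_energy (hp : 0 < p) (hlam : 0 < lam) (hab : a ≤ b)
    (hd : ∀ x ∈ Icc a b, HasDerivAt w (w' x) x ∧ HasDerivAt w' (w'' x) x)
    (hk : IntervalIntegrable k volume a b) (hk0 : ∀ s, 0 ≤ k s)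
    (hbound : ∀ s ∈ Ioo a b, ∃ t ∈ Icc a b, |p ^ 2 * w'' s + lam * w s| ≤ k s * |w t|)
    (hsmall : ∫ s in a..b, k s ≤ p * √lam / 2) :
    energy p lam w w' b ≤ 2 * energy p lam w w' a := by
  have hsl : 0 < √lam := Real.sqrt_pos.mpr hlam
  set C := 2 * energy p lam w w' a / √lam
  have hC : ∀ t ∈ Icc a b, |w t| ≤ C := fun t ht => by
    rw [le_div_iff₀ hsl, mul_comm]
    exact sqrt_mul_abs_le_two_mul_energy hp hlam.le hab hd hk hk0 hbound hsmall ht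
  have hforce : ∀ s ∈ Ioo a b, |p ^ 2 * w'' s + lam * w s| ≤ k s * C := fun s hs => by
    obtain ⟨t, ht, hle⟩ := hbound s hs
    exact hle.trans (mul_le_mul_of_nonneg_left (hC t ht) (hk0 s))
  have hb := energy_le_add_of_forcing_le hp hlam.le ((abs_nonneg _).trans (hC a ⟨le_rfl, hab⟩))
    hd hk hk0 hforce hsmall (right_mem_Icc.mpr hab)
  have hCeq : √lam * C / 2 = energy p lam w w' a := by simp only [C]; field_simp
  linarith

end Energy

lemma energy_eq_abs_mul_of_transmission {p₁ p₂ lam α β c : ℝ} {u u' v v' : ℝ → ℝ}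
    (hu : u c = α * v c) (hu' : u' c = β * v' c) (hαβ : p₂ * β = p₁ * α) :
    energy p₂ lam u u' c = |α| * energy p₁ lam v v' c := by
  rw [energy, energy, hu, hu', ← Real.sqrt_sq_eq_abs, ← Real.sqrt_mul (sq_nonneg _)]
  congr 1
  linear_combination (p₂ * β + p₁ * α) * v' c ^ 2 * hαβ

lemma energy_eq_of_initial {p lam : ℝ} {w w' : ℝ → ℝ} (hp : 0 < p) (hlam : 0 ≤ lam) {c : ℝ}
    (hw : w c = p) (hw' : w' c = -√lam) :
    energy p lam w w' c = √2 * √lam * p := by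
  have hsq : lam * p ^ 2 + p ^ 2 * lam = (√2 * √lam * p) ^ 2 := by
    rw [mul_pow, mul_pow, Real.sq_sqrt zero_le_two, Real.sq_sqrt hlam]
    ring
  rw [energy, hw, hw', neg_sq, Real.sq_sqrt hlam, hsq, Real.sqrt_sq (by positivity)]

lemma le_mul_sqrt_div_two_of_four_mul_sq_le {p Q lam : ℝ} (hp : 0 < p)
    (h : 4 * ((1 / p) * Q) ^ 2 ≤ lam) : Q ≤ p * √lam / 2 := by
  have hQ : 2 * Q / p ≤ √lam := Real.le_sqrt_of_sq_le <| by
    calc (2 * Q / p) ^ 2 = 4 * ((1 / p) * Q) ^ 2 := by ring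
      _ ≤ lam := h
  rw [div_le_iff₀ hp] at hQ
  linarith

section Integrability

variable {f : ℝ → ℝ} {a b : ℝ}

lemma intervalIntegrable_of_continuousOn_Ioo {la lb : ℝ} (hab : a ≤ b)
    (hf : ContinuousOn f (Ioo a b)) (ha : Tendsto f (𝓝[>] a) (𝓝 la))
    (hb : Tendsto f (𝓝[<] b) (𝓝 lb)) : IntervalIntegrable f volume a b := by
  have hext :=
    (continuousOn_Icc_extendFrom_Ioo hf ha hb).intervalIntegrable_of_Icc (μ := volume) hab
  rw [intervalIntegrable_iff_integrableOn_Ioo_of_le hab] at hext ⊢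
  exact hext.congr_fun (extendFrom_extends hf) measurableSet_Ioo

lemma intervalIntegrable_of_continuousOn_Ico (hab : a < b) (hf : ContinuousOn f (Ico a b))
    (hb : ∃ L, Tendsto f (𝓝[<] b) (𝓝 L)) : IntervalIntegrable f volume a b := by
  obtain ⟨L, hL⟩ := hb
  refine intervalIntegrable_of_continuousOn_Ioo (la := f a) hab.le
    (hf.mono Ioo_subset_Ico_self) ?_ hL
  rw [← nhdsWithin_Ioo_eq_nhdsGT hab]
  exact ((hf a ⟨le_rfl, hab⟩).mono Ioo_subset_Ico_self).tendsto

lemma intervalIntegrable_of_continuousOn_Ioc (hab : a < b) (hf : ContinuousOn f (Ioc a b))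
    (ha : ∃ L, Tendsto f (𝓝[>] a) (𝓝 L)) : IntervalIntegrable f volume a b := by
  obtain ⟨L, hL⟩ := ha
  refine intervalIntegrable_of_continuousOn_Ioo (lb := f b) hab.le
    (hf.mono Ioo_subset_Ioc_self) hL ?_
  rw [← nhdsWithin_Ioo_eq_nhdsLT hab]
  exact ((hf b ⟨hab, le_rfl⟩).mono Ioo_subset_Ioc_self).tendsto

end Integrability

lemma exists_forcing_le_of_delay {p lam a b : ℝ} {q Δ w w'' : ℝ → ℝ}
    (heq : ∀ x ∈ Icc a b, p ^ 2 * w'' x + q x * w (x - Δ x) + lam * w x = 0)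
    (hret : ∀ s ∈ Ioo a b, s - Δ s ∈ Icc a b) :
    ∀ s ∈ Ioo a b, ∃ t ∈ Icc a b, |p ^ 2 * w'' s + lam * w s| ≤ |q s| * |w t| := fun s hs => by
  refine ⟨s - Δ s, hret s hs, ?_⟩
  rw [← abs_mul, show p ^ 2 * w'' s + lam * w s = -(q s * w (s - Δ s)) by
    linarith [heq s (Ioo_subset_Icc_self hs)], abs_neg]

theorem stmt5_general
    (p1 p2 γ1 γ2 δ1 δ2 : ℝ) (q Δ : ℝ → ℝ)
    (hp1 : 0 < p1) (hp2 : 0 < p2)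
    (hδ1 : δ1 ≠ 0) (hδ2 : δ2 ≠ 0)
    (hγδ : γ1 * δ2 * p1 = γ2 * δ1 * p2)
    (hqc1 : ContinuousOn q (Set.Ico 0 (Real.pi/2)))
    (hqc2 : ContinuousOn q (Set.Ioc (Real.pi/2) Real.pi))
    (hqlim1 : ∃ L : ℝ, Filter.Tendsto q (nhdsWithin (Real.pi/2) (Set.Iio (Real.pi/2))) (nhds L))
    (hqlim2 : ∃ L : ℝ, Filter.Tendsto q (nhdsWithin (Real.pi/2) (Set.Ioi (Real.pi/2))) (nhds L))
    (hΔnonneg : ∀ x ∈ Set.Ico (0:ℝ) (Real.pi/2) ∪ Set.Ioc (Real.pi/2) Real.pi, 0 ≤ Δ x)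
    (hret1 : ∀ x ∈ Set.Ico (0:ℝ) (Real.pi/2), 0 ≤ x - Δ x)
    (hret2 : ∀ x ∈ Set.Ioc (Real.pi/2) Real.pi, Real.pi/2 ≤ x - Δ x)
    (w1 w1' w1'' : ℝ → ℝ → ℝ)
    (hw1d : ∀ lam : ℝ, 0 < lam → ∀ x ∈ Set.Icc (0:ℝ) (Real.pi/2),
      HasDerivAt (w1 lam) (w1' lam x) x ∧ HasDerivAt (w1' lam) (w1'' lam x) x)
    (hw1eq : ∀ lam : ℝ, 0 < lam → ∀ x ∈ Set.Icc (0:ℝ) (Real.pi/2),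
      p1^2 * w1'' lam x + q x * w1 lam (x - Δ x) + lam * w1 lam x = 0)
    (hw1ic : ∀ lam : ℝ, 0 < lam → w1 lam 0 = p1 ∧ w1' lam 0 = -Real.sqrt lam)
    (w2 w2' w2'' : ℝ → ℝ → ℝ)
    (hw2d : ∀ lam : ℝ, 0 < lam → ∀ x ∈ Set.Icc (Real.pi/2) Real.pi,
      HasDerivAt (w2 lam) (w2' lam x) x ∧ HasDerivAt (w2' lam) (w2'' lam x) x)
    (hw2eq : ∀ lam : ℝ, 0 < lam → ∀ x ∈ Set.Icc (Real.pi/2) Real.pi,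
      p2^2 * w2'' lam x + q x * w2 lam (x - Δ x) + lam * w2 lam x = 0)
    (hw2ic : ∀ lam : ℝ, 0 < lam →
      w2 lam (Real.pi/2) = (γ1/δ1) * w1 lam (Real.pi/2) ∧
      w2' lam (Real.pi/2) = (γ2/δ2) * w1' lam (Real.pi/2))
    (lam : ℝ) (hlam : 0 < lam)
    (hlam4 : max (4 * ((1/p1) * ∫ τ in (0:ℝ)..(Real.pi/2), |q τ|)^2) (4 * ((1/p2) * ∫ τ in (Real.pi/2)..Real.pi, |q τ|)^2) ≤ lam)
    :
    ∀ x ∈ Set.Icc (Real.pi/2) Real.pi,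
      |w2 lam x| ≤ 4 * Real.sqrt 2 * p1 * (|γ1/δ1| + |p2*γ2/(4*p1*δ2)|) := by
  intro x hx
  have hπ : 0 < Real.pi / 2 := by positivity
  have hπ' : Real.pi / 2 < Real.pi := by linarith [Real.pi_pos]
  have hq1 : IntervalIntegrable (fun s => |q s|) volume 0 (Real.pi / 2) :=
    (intervalIntegrable_of_continuousOn_Ico hπ hqc1 hqlim1).abs
  have hq2 : IntervalIntegrable (fun s => |q s|) volume (Real.pi / 2) Real.pi :=
    (intervalIntegrable_of_continuousOn_Ioc hπ' hqc2 hqlim2).abs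
  have hsmall1 := le_mul_sqrt_div_two_of_four_mul_sq_le hp1 ((le_max_left _ _).trans hlam4)
  have hsmall2 := le_mul_sqrt_div_two_of_four_mul_sq_le hp2 ((le_max_right _ _).trans hlam4)
  have hbound1 := exists_forcing_le_of_delay (hw1eq lam hlam) fun s hs =>
    have hs' := Ioo_subset_Ico_self hs
    ⟨hret1 s hs', by linarith [hΔnonneg s (Or.inl hs'), hs.2]⟩
  have hbound2 := exists_forcing_le_of_delay (hw2eq lam hlam) fun s hs =>
    have hs' := Ioo_subset_Ioc_self hs
    ⟨hret2 s hs', by linarith [hΔnonneg s (Or.inr hs'), hs.2]⟩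
  have hE1 : energy p1 lam (w1 lam) (w1' lam) (Real.pi / 2) ≤ 2 * (√2 * √lam * p1) := by
    rw [← energy_eq_of_initial hp1 hlam.le (hw1ic lam hlam).1 (hw1ic lam hlam).2]
    exact energy_le_two_mul_energy hp1 hlam hπ.le (hw1d lam hlam) hq1 (fun _ => abs_nonneg _)
      hbound1 hsmall1
  have hE2 : energy p2 lam (w2 lam) (w2' lam) (Real.pi / 2)
      = |γ1 / δ1| * energy p1 lam (w1 lam) (w1' lam) (Real.pi / 2) :=
    energy_eq_abs_mul_of_transmission (hw2ic lam hlam).1 (hw2ic lam hlam).2 <| by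
      field_simp
      linear_combination -hγδ
  have hw2x := sqrt_mul_abs_le_two_mul_energy hp2 hlam.le hπ'.le (hw2d lam hlam) hq2
    (fun _ => abs_nonneg _) hbound2 hsmall2 hx
  have hsl : 0 < √lam := Real.sqrt_pos.mpr hlam
  have hw2le : |w2 lam x| ≤ 4 * √2 * p1 * |γ1 / δ1| := by
    refine le_of_mul_le_mul_left ?_ hsl
    calc √lam * |w2 lam x| ≤ 2 * (|γ1 / δ1| * energy p1 lam (w1 lam) (w1' lam) (Real.pi / 2)) := by
          rwa [← hE2]
      _ ≤ 2 * (|γ1 / δ1| * (2 * (√2 * √lam * p1))) := by gcongr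
      _ = √lam * (4 * √2 * p1 * |γ1 / δ1|) := by ring
  have hrest : 0 ≤ 4 * √2 * p1 * |p2 * γ2 / (4 * p1 * δ2)| := by positivity
  linarith

theorem stmt5
    (p1 p2 γ1 γ2 δ1 δ2 d : ℝ) (q Δ : ℝ → ℝ)
    (hp1 : 0 < p1) (hp2 : 0 < p2)
    (hδ1 : δ1 ≠ 0) (hδ2 : δ2 ≠ 0)
    (hγδ : γ1 * δ2 * p1 = γ2 * δ1 * p2)
    (hqc1 : ContinuousOn q (Set.Ico 0 (Real.pi/2)))
    (hqc2 : ContinuousOn q (Set.Ioc (Real.pi/2) Real.pi))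
    (hqlim1 : ∃ L : ℝ, Filter.Tendsto q (nhdsWithin (Real.pi/2) (Set.Iio (Real.pi/2))) (nhds L))
    (hqlim2 : ∃ L : ℝ, Filter.Tendsto q (nhdsWithin (Real.pi/2) (Set.Ioi (Real.pi/2))) (nhds L))
    (hΔc1 : ContinuousOn Δ (Set.Ico 0 (Real.pi/2)))
    (hΔc2 : ContinuousOn Δ (Set.Ioc (Real.pi/2) Real.pi))
    (hΔlim1 : ∃ L : ℝ, Filter.Tendsto Δ (nhdsWithin (Real.pi/2) (Set.Iio (Real.pi/2))) (nhds L))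
    (hΔlim2 : ∃ L : ℝ, Filter.Tendsto Δ (nhdsWithin (Real.pi/2) (Set.Ioi (Real.pi/2))) (nhds L))
    (hΔnonneg : ∀ x ∈ Set.Ico (0:ℝ) (Real.pi/2) ∪ Set.Ioc (Real.pi/2) Real.pi, 0 ≤ Δ x)
    (hret1 : ∀ x ∈ Set.Ico (0:ℝ) (Real.pi/2), 0 ≤ x - Δ x)
    (hret2 : ∀ x ∈ Set.Ioc (Real.pi/2) Real.pi, Real.pi/2 ≤ x - Δ x)
    (w1 w1' w1'' : ℝ → ℝ → ℝ)
    (hw1d : ∀ lam : ℝ, 0 < lam → ∀ x ∈ Set.Icc (0:ℝ) (Real.pi/2),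
      HasDerivAt (w1 lam) (w1' lam x) x ∧ HasDerivAt (w1' lam) (w1'' lam x) x)
    (hw1eq : ∀ lam : ℝ, 0 < lam → ∀ x ∈ Set.Icc (0:ℝ) (Real.pi/2),
      p1^2 * w1'' lam x + q x * w1 lam (x - Δ x) + lam * w1 lam x = 0)
    (hw1ic : ∀ lam : ℝ, 0 < lam → w1 lam 0 = p1 ∧ w1' lam 0 = -Real.sqrt lam)
    (w2 w2' w2'' : ℝ → ℝ → ℝ)
    (hw2d : ∀ lam : ℝ, 0 < lam → ∀ x ∈ Set.Icc (Real.pi/2) Real.pi,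
      HasDerivAt (w2 lam) (w2' lam x) x ∧ HasDerivAt (w2' lam) (w2'' lam x) x)
    (hw2eq : ∀ lam : ℝ, 0 < lam → ∀ x ∈ Set.Icc (Real.pi/2) Real.pi,
      p2^2 * w2'' lam x + q x * w2 lam (x - Δ x) + lam * w2 lam x = 0)
    (hw2ic : ∀ lam : ℝ, 0 < lam →
      w2 lam (Real.pi/2) = (γ1/δ1) * w1 lam (Real.pi/2) ∧
      w2' lam (Real.pi/2) = (γ2/δ2) * w1' lam (Real.pi/2))
    (lam : ℝ) (hlam : 0 < lam)
    (hlam4 : max (4 * ((1/p1) * ∫ τ in (0:ℝ)..(Real.pi/2), |q τ|)^2) (4 * ((1/p2) * ∫ τ in (Real.pi/2)..Real.pi, |q τ|)^2) ≤ lam)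
    :
    ∀ x ∈ Set.Icc (Real.pi/2) Real.pi,
      |w2 lam x| ≤ 4 * Real.sqrt 2 * p1 * (|γ1/δ1| + |p2*γ2/(4*p1*δ2)|) :=
  stmt5_general p1 p2 γ1 γ2 δ1 δ2 q Δ hp1 hp2 hδ1 hδ2 hγδ hqc1 hqc2 hqlim1 hqlim2 hΔnonneg hret1
    hret2 w1 w1' w1'' hw1d hw1eq hw1ic w2 w2' w2'' hw2d hw2eq hw2ic lam hlam hlam4
end
end

section
/- (Asymptotics (26) for w₁′.) There exist constants C > 0 and s₀ > 0 such that for all s ≥ s₀ and all x ∈ [0,π/2], |w₁′(x,s²) + √2·s·sin(s·x/p₁ + π/4)| ≤ C. -/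
/-!
`w₁(·, s²)` solves `p₁² w'' + s² w = -q(x) w(x - Δ x)`, a harmonic oscillator of frequency
`s / p₁` forced through a retarded argument. With `|q| ≤ B`, the energy `s² w² + p₁² w'²`
grows at rate `O(B s p₁)` as long as it stays below `(2 s p₁)²`, so for `s p₁ > 2πB` it never
reaches that level on `[0, π/2]` and `|w| ≤ 2 p₁` there. The difference between `w₁` and the
free solution `p₁ (cos (s x / p₁) - sin (s x / p₁))` with the same initial data then has an
energy `G` with `|G'| ≤ 4B √G` and `G 0 = 0`, so `√G ≤ 2Bx`, which bounds the difference of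
the derivatives by `πB / p₁`.
-/

open Set Filter Topology Real

noncomputable section

theorem exists_abs_le_of_continuousOn_Ico_of_tendsto {f : ℝ → ℝ} {a b L : ℝ}
    (hf : ContinuousOn f (Ico a b)) (hL : Tendsto f (𝓝[<] b) (𝓝 L)) :
    ∃ B, 0 ≤ B ∧ ∀ x ∈ Ico a b, |f x| ≤ B := by
  classical
  have hext : ContinuousOn (Function.update f b L) (Icc a b) := by
    rw [continuousOn_update_iff, Icc_sdiff_right]
    exact ⟨hf, fun _ => hL.mono_left (nhdsWithin_mono _ Ico_subset_Iio_self)⟩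
  obtain ⟨B, hB⟩ := isCompact_Icc.exists_bound_of_continuousOn hext
  refine ⟨max B 0, le_max_right _ _, fun x hx => ?_⟩
  have := hB x (Ico_subset_Icc_self hx)
  rw [Function.update_of_ne hx.2.ne, Real.norm_eq_abs] at this
  exact this.trans (le_max_left _ _)

theorem ContinuousOn.forall_le_of_forall_Ico_le_imp_lt {f : ℝ → ℝ} {a b M : ℝ}
    (hf : ContinuousOn f (Icc a b))
    (h : ∀ x ∈ Icc a b, (∀ t ∈ Ico a x, f t ≤ M) → f x < M) :
    ∀ x ∈ Icc a b, f x ≤ M := by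
  by_contra! hex
  set A := Icc a b ∩ f ⁻¹' Ici M
  have hA : IsClosed A := hf.preimage_isClosed_of_isClosed isClosed_Icc isClosed_Ici
  have hAne : A.Nonempty := let ⟨x, hx, hfx⟩ := hex; ⟨x, hx, hfx.le⟩
  have hAbdd : BddBelow A := ⟨a, fun t ht => ht.1.1⟩
  have hmem : sInf A ∈ A := hA.csInf_mem hAne hAbdd
  refine (h _ hmem.1 fun t ht => ?_).not_ge hmem.2
  by_contra! hMt
  exact ht.2.not_ge (csInf_le hAbdd ⟨⟨ht.1, ht.2.le.trans hmem.1.2⟩, hMt.le⟩)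

theorem sqrt_le_sqrt_add_mul_of_abs_deriv_le {G G' : ℝ → ℝ} {a b K : ℝ} (hK : 0 ≤ K)
    (hG : ∀ x ∈ Icc a b, HasDerivAt G (G' x) x) (hG0 : ∀ x ∈ Icc a b, 0 ≤ G x)
    (hG' : ∀ x ∈ Ico a b, |G' x| ≤ 2 * K * √(G x)) :
    ∀ x ∈ Icc a b, √(G x) ≤ √(G a) + K * (x - a) := by
  intro x hx
  refine le_of_forall_pos_le_add fun ε hε => ?_
  -- `√(G + ε²)` is differentiable even where `G` vanishes
  have hpos : ∀ y ∈ Icc a b, 0 < G y + ε ^ 2 := fun y hy => by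
    have := hG0 y hy; positivity
  have hderiv : ∀ y ∈ Icc a b, HasDerivWithinAt (fun z => √(G z + ε ^ 2))
      (G' y / (2 * √(G y + ε ^ 2))) (Icc a b) y := fun y hy =>
    (((hG y hy).add_const _).sqrt (hpos y hy).ne').hasDerivWithinAt
  have hbound : ∀ y ∈ Ico a b, ‖G' y / (2 * √(G y + ε ^ 2))‖ ≤ K := by
    intro y hy
    have hr : 0 < √(G y + ε ^ 2) := Real.sqrt_pos.mpr (hpos y (Ico_subset_Icc_self hy))
    have hle : √(G y) ≤ √(G y + ε ^ 2) := Real.sqrt_le_sqrt (le_add_of_nonneg_right (sq_nonneg ε))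
    rw [Real.norm_eq_abs, abs_div, abs_of_pos (by positivity : (0:ℝ) < 2 * √(G y + ε ^ 2)),
      div_le_iff₀ (by positivity)]
    nlinarith [hG' y hy]
  have hmvt := norm_image_sub_le_of_norm_deriv_le_segment' hderiv hbound x hx
  rw [Real.norm_eq_abs] at hmvt
  have hx' : √(G x) ≤ √(G x + ε ^ 2) := Real.sqrt_le_sqrt (le_add_of_nonneg_right (sq_nonneg ε))
  have ha' : √(G a + ε ^ 2) ≤ √(G a) + ε := by
    have hGa := Real.sq_sqrt (hG0 a (left_mem_Icc.mpr (hx.1.trans hx.2)))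
    rw [Real.sqrt_le_iff]
    constructor
    · positivity
    · nlinarith [Real.sqrt_nonneg (G a)]
  linarith [(abs_le.mp hmvt).2]

def oscEnergy (p s : ℝ) (f f' : ℝ → ℝ) (t : ℝ) : ℝ := s ^ 2 * f t ^ 2 + p ^ 2 * f' t ^ 2

theorem hasDerivAt_oscEnergy {p s t : ℝ} {f f' f'' : ℝ → ℝ} (hf : HasDerivAt f (f' t) t)
    (hf' : HasDerivAt f' (f'' t) t) :
    HasDerivAt (oscEnergy p s f f') (2 * f' t * (p ^ 2 * f'' t + s ^ 2 * f t)) t := by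
  refine (((hf.pow 2).const_mul (s ^ 2)).add ((hf'.pow 2).const_mul (p ^ 2))).congr_deriv ?_
  push_cast
  ring

theorem mul_abs_le_sqrt_oscEnergy {p s t : ℝ} {f f' : ℝ → ℝ} (hs : 0 ≤ s) :
    s * |f t| ≤ √(oscEnergy p s f f' t) := by
  rw [Real.le_sqrt (by positivity) (by unfold oscEnergy; positivity), mul_pow, sq_abs]
  unfold oscEnergy
  nlinarith [sq_nonneg (p * f' t)]

theorem mul_abs_deriv_le_sqrt_oscEnergy {p s t : ℝ} {f f' : ℝ → ℝ} (hp : 0 ≤ p) :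
    p * |f' t| ≤ √(oscEnergy p s f f' t) := by
  rw [Real.le_sqrt (by positivity) (by unfold oscEnergy; positivity), mul_pow, sq_abs]
  unfold oscEnergy
  nlinarith [sq_nonneg (s * f t)]

def freeSolution (p s y : ℝ) : ℝ := p * (cos (s * y / p) - sin (s * y / p))

def freeSolutionDeriv (p s y : ℝ) : ℝ := -s * (sin (s * y / p) + cos (s * y / p))

theorem hasDerivAt_freeSolution {p s : ℝ} (hp : p ≠ 0) (y : ℝ) :
    HasDerivAt (freeSolution p s) (freeSolutionDeriv p s y) y := by
  have hθ : HasDerivAt (fun z => s * z / p) (s / p) y := by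
    simpa using ((hasDerivAt_id y).const_mul s).div_const p
  refine (((hθ.cos).sub hθ.sin).const_mul p).congr_deriv ?_
  unfold freeSolutionDeriv
  field_simp
  ring

theorem hasDerivAt_freeSolutionDeriv {p s : ℝ} (hp : p ≠ 0) (y : ℝ) :
    HasDerivAt (freeSolutionDeriv p s) (-(s / p) ^ 2 * freeSolution p s y) y := by
  have hθ : HasDerivAt (fun z => s * z / p) (s / p) y := by
    simpa using ((hasDerivAt_id y).const_mul s).div_const p
  refine (((hθ.sin).add hθ.cos).const_mul (-s)).congr_deriv ?_
  unfold freeSolution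
  field_simp
  ring

theorem sqrt_two_mul_sin_add_pi_div_four (θ : ℝ) : √2 * sin (θ + π / 4) = sin θ + cos θ := by
  rw [sin_add, sin_pi_div_four, cos_pi_div_four]
  linear_combination (sin θ + cos θ) / 2 * Real.mul_self_sqrt (zero_le_two : (0:ℝ) ≤ 2)

theorem abs_le_of_oscEnergy_le {p s c t : ℝ} {f f' : ℝ → ℝ} (hs : 0 < s) (hc : 0 ≤ c)
    (h : oscEnergy p s f f' t ≤ (s * c) ^ 2) : |f t| ≤ c := by
  refine le_of_mul_le_mul_left ?_ hs
  calc s * |f t| ≤ √(oscEnergy p s f f' t) := mul_abs_le_sqrt_oscEnergy hs.le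
    _ ≤ s * c := Real.sqrt_le_iff.mpr ⟨by positivity, h⟩

theorem abs_deriv_le_of_oscEnergy_le {p s c t : ℝ} {f f' : ℝ → ℝ} (hp : 0 < p) (hc : 0 ≤ c)
    (h : oscEnergy p s f f' t ≤ (p * c) ^ 2) : |f' t| ≤ c := by
  refine le_of_mul_le_mul_left ?_ hp
  calc p * |f' t| ≤ √(oscEnergy p s f f' t) := mul_abs_deriv_le_sqrt_oscEnergy hp.le
    _ ≤ p * c := Real.sqrt_le_iff.mpr ⟨by positivity, h⟩

section DelayedOscillator

variable {p s b B : ℝ} {q τ W W' W'' : ℝ → ℝ}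

theorem oscEnergy_le_of_delay (hp : 0 < p) (hs : 0 < s) (hB : 0 ≤ B)
    (hsmall : 4 * B * b < s * p)
    (hd : ∀ x ∈ Icc 0 b, HasDerivAt W (W' x) x ∧ HasDerivAt W' (W'' x) x)
    (heq : ∀ x ∈ Icc 0 b, p ^ 2 * W'' x + q x * W (τ x) + s ^ 2 * W x = 0)
    (hq : ∀ x ∈ Ico 0 b, |q x| ≤ B) (hτ : ∀ x ∈ Ico 0 b, τ x ∈ Icc 0 x)
    (hW0 : W 0 = p) (hW'0 : W' 0 = -s) :
    ∀ x ∈ Icc 0 b, oscEnergy p s W W' x ≤ (2 * s * p) ^ 2 := by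
  have hE : ∀ x ∈ Icc 0 b, HasDerivAt (oscEnergy p s W W')
      (2 * W' x * (p ^ 2 * W'' x + s ^ 2 * W x)) x :=
    fun x hx => hasDerivAt_oscEnergy (hd x hx).1 (hd x hx).2
  refine ContinuousOn.forall_le_of_forall_Ico_le_imp_lt
    (fun x hx => (hE x hx).continuousAt.continuousWithinAt) fun x hx hbefore => ?_
  have hxb : Icc 0 x ⊆ Icc 0 b := Icc_subset_Icc_right hx.2
  have hbound : ∀ t ∈ Ico 0 x, ‖2 * W' t * (p ^ 2 * W'' t + s ^ 2 * W t)‖ ≤ 8 * B * s * p := by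
    intro t ht
    have htb : t ∈ Ico 0 b := ⟨ht.1, ht.2.trans_le hx.2⟩
    have hτt := hτ t htb
    have hW't : |W' t| ≤ 2 * s :=
      abs_deriv_le_of_oscEnergy_le hp (by positivity) ((hbefore t ht).trans_eq (by ring))
    have hWτ : |W (τ t)| ≤ 2 * p :=
      abs_le_of_oscEnergy_le hs (by positivity)
        ((hbefore _ ⟨hτt.1, hτt.2.trans_lt ht.2⟩).trans_eq (by ring))
    have hforce : p ^ 2 * W'' t + s ^ 2 * W t = -(q t * W (τ t)) := by
      linarith [heq t (hxb (Ico_subset_Icc_self ht))]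
    rw [hforce, Real.norm_eq_abs, abs_mul, abs_mul, abs_neg, abs_mul, abs_two]
    calc 2 * |W' t| * (|q t| * |W (τ t)|) ≤ 2 * (2 * s) * (B * (2 * p)) := by
          gcongr
          exact hq t htb
      _ = 8 * B * s * p := by ring
  have hmvt := norm_image_sub_le_of_norm_deriv_le_segment'
    (fun t ht => (hE t (hxb ht)).hasDerivWithinAt) hbound x (right_mem_Icc.mpr hx.1)
  rw [Real.norm_eq_abs] at hmvt
  have hE0 : oscEnergy p s W W' 0 = 2 * s ^ 2 * p ^ 2 := by
    simp only [oscEnergy, hW0, hW'0]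
    ring
  have hgrowth : 8 * B * s * p * x ≤ 8 * B * s * p * b := by gcongr; exact hx.2
  nlinarith [(abs_le.mp hmvt).2, mul_pos hs hp]

theorem mul_abs_deriv_sub_freeSolutionDeriv_le_of_delay (hp : 0 < p) (hs : 0 < s) (hB : 0 ≤ B)
    (hsmall : 4 * B * b < s * p)
    (hd : ∀ x ∈ Icc 0 b, HasDerivAt W (W' x) x ∧ HasDerivAt W' (W'' x) x)
    (heq : ∀ x ∈ Icc 0 b, p ^ 2 * W'' x + q x * W (τ x) + s ^ 2 * W x = 0)
    (hq : ∀ x ∈ Ico 0 b, |q x| ≤ B) (hτ : ∀ x ∈ Ico 0 b, τ x ∈ Icc 0 x)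
    (hW0 : W 0 = p) (hW'0 : W' 0 = -s) :
    ∀ x ∈ Icc 0 b, p * |W' x - freeSolutionDeriv p s x| ≤ 2 * B * x := by
  have hWb : ∀ x ∈ Icc 0 b, |W x| ≤ 2 * p := fun x hx =>
    abs_le_of_oscEnergy_le hs (by positivity)
      ((oscEnergy_le_of_delay hp hs hB hsmall hd heq hq hτ hW0 hW'0 x hx).trans_eq (by ring))
  set U := W - freeSolution p s
  set U' := W' - freeSolutionDeriv p s
  set G := oscEnergy p s U U'
  -- the free solution solves the unperturbed equation, so `U` satisfies the same forced equation
  have hforce : ∀ x ∈ Icc 0 b, p ^ 2 * (W'' x + (s / p) ^ 2 * freeSolution p s x) + s ^ 2 * U x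
      = -(q x * W (τ x)) := fun x hx => by
    simp only [U, Pi.sub_apply]
    field_simp
    linear_combination heq x hx
  have hG : ∀ x ∈ Icc 0 b, HasDerivAt G (2 * U' x * -(q x * W (τ x))) x := fun x hx => by
    rw [← hforce x hx]
    exact hasDerivAt_oscEnergy (f' := U') (f'' := fun y => W'' y + (s / p) ^ 2 * freeSolution p s y)
      ((hd x hx).1.sub (hasDerivAt_freeSolution hp.ne' x))
      (((hd x hx).2.sub (hasDerivAt_freeSolutionDeriv hp.ne' x)).congr_deriv (by ring))
  have hG' : ∀ x ∈ Ico 0 b, |2 * U' x * -(q x * W (τ x))| ≤ 2 * (2 * B) * √(G x) := by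
    intro x hx
    have hτx := hτ x hx
    rw [abs_mul, abs_mul, abs_neg, abs_mul, abs_two]
    calc 2 * |U' x| * (|q x| * |W (τ x)|) ≤ 2 * |U' x| * (B * (2 * p)) := by
          gcongr
          exacts [hq x hx, hWb _ ⟨hτx.1, hτx.2.trans hx.2.le⟩]
      _ = 2 * (2 * B) * (p * |U' x|) := by ring
      _ ≤ 2 * (2 * B) * √(G x) := by gcongr; exact mul_abs_deriv_le_sqrt_oscEnergy hp.le
  have hG0 : G 0 = 0 := by
    simp [G, oscEnergy, U, U', hW0, hW'0, freeSolution, freeSolutionDeriv]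
  intro x hx
  calc p * |U' x| ≤ √(G x) := mul_abs_deriv_le_sqrt_oscEnergy hp.le
    _ ≤ √(G 0) + 2 * B * (x - 0) := sqrt_le_sqrt_add_mul_of_abs_deriv_le (by positivity) hG
        (fun y _ => by simp only [G, oscEnergy]; positivity) hG' x hx
    _ = 2 * B * x := by rw [hG0]; simp

end DelayedOscillator

theorem stmt9_general
    (p1 : ℝ) (q Δ : ℝ → ℝ)
    (hp1 : 0 < p1)
    (hqc1 : ContinuousOn q (Set.Ico 0 (Real.pi/2)))
    (hqlim1 : ∃ L : ℝ, Filter.Tendsto q (nhdsWithin (Real.pi/2) (Set.Iio (Real.pi/2))) (nhds L))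
    (hΔnonneg : ∀ x ∈ Set.Ico (0:ℝ) (Real.pi/2) ∪ Set.Ioc (Real.pi/2) Real.pi, 0 ≤ Δ x)
    (hret1 : ∀ x ∈ Set.Ico (0:ℝ) (Real.pi/2), 0 ≤ x - Δ x)
    (w1 w1' w1'' : ℝ → ℝ → ℝ)
    (hw1d : ∀ lam : ℝ, 0 < lam → ∀ x ∈ Set.Icc (0:ℝ) (Real.pi/2),
      HasDerivAt (w1 lam) (w1' lam x) x ∧ HasDerivAt (w1' lam) (w1'' lam x) x)
    (hw1eq : ∀ lam : ℝ, 0 < lam → ∀ x ∈ Set.Icc (0:ℝ) (Real.pi/2),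
      p1^2 * w1'' lam x + q x * w1 lam (x - Δ x) + lam * w1 lam x = 0)
    (hw1ic : ∀ lam : ℝ, 0 < lam → w1 lam 0 = p1 ∧ w1' lam 0 = -Real.sqrt lam)
    :
    ∃ C : ℝ, 0 < C ∧ ∃ s0 : ℝ, 0 < s0 ∧ ∀ s : ℝ, s0 ≤ s → ∀ x ∈ Set.Icc (0:ℝ) (Real.pi/2),
      |w1' (s^2) x + Real.sqrt 2 * s * Real.sin (s * x / p1 + Real.pi/4)| ≤ C := by
  obtain ⟨L, hL⟩ := hqlim1
  obtain ⟨B, hB, hqB⟩ := exists_abs_le_of_continuousOn_Ico_of_tendsto hqc1 hL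
  refine ⟨B * π / p1 + 1, by positivity, 2 * π * B / p1 + 1, by positivity, fun s hs x hx => ?_⟩
  have hs0 : 0 < s := lt_of_lt_of_le (by positivity) hs
  have hsmall : 4 * B * (π / 2) < s * p1 := by
    have := mul_le_mul_of_nonneg_right hs hp1.le
    rw [add_mul, div_mul_cancel₀ _ hp1.ne'] at this
    linarith
  have hlam : 0 < s ^ 2 := by positivity
  have hτ : ∀ y ∈ Ico 0 (π / 2), y - Δ y ∈ Icc 0 y := fun y hy =>
    ⟨hret1 y hy, sub_le_self _ (hΔnonneg y (Or.inl hy))⟩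
  have hW'0 : w1' (s ^ 2) 0 = -s := by rw [(hw1ic _ hlam).2, Real.sqrt_sq hs0.le]
  have hdiff := mul_abs_deriv_sub_freeSolutionDeriv_le_of_delay hp1 hs0 hB hsmall
    (hw1d _ hlam) (hw1eq _ hlam) hqB hτ (hw1ic _ hlam).1 hW'0 x hx
  have hsum : w1' (s ^ 2) x + √2 * s * sin (s * x / p1 + π / 4)
      = w1' (s ^ 2) x - freeSolutionDeriv p1 s x := by
    rw [mul_right_comm, sqrt_two_mul_sin_add_pi_div_four, freeSolutionDeriv]
    ring
  rw [hsum]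
  calc _ ≤ 2 * B * x / p1 := (le_div_iff₀' hp1).mpr hdiff
    _ ≤ B * π / p1 := div_le_div_of_nonneg_right (by nlinarith [hx.2]) hp1.le
    _ ≤ B * π / p1 + 1 := by linarith

theorem stmt9
    (p1 p2 γ1 γ2 δ1 δ2 d : ℝ) (q Δ : ℝ → ℝ)
    (hp1 : 0 < p1) (hp2 : 0 < p2)
    (hδ1 : δ1 ≠ 0) (hδ2 : δ2 ≠ 0)
    (hγδ : γ1 * δ2 * p1 = γ2 * δ1 * p2)
    (hqc1 : ContinuousOn q (Set.Ico 0 (Real.pi/2)))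
    (hqc2 : ContinuousOn q (Set.Ioc (Real.pi/2) Real.pi))
    (hqlim1 : ∃ L : ℝ, Filter.Tendsto q (nhdsWithin (Real.pi/2) (Set.Iio (Real.pi/2))) (nhds L))
    (hqlim2 : ∃ L : ℝ, Filter.Tendsto q (nhdsWithin (Real.pi/2) (Set.Ioi (Real.pi/2))) (nhds L))
    (hΔc1 : ContinuousOn Δ (Set.Ico 0 (Real.pi/2)))
    (hΔc2 : ContinuousOn Δ (Set.Ioc (Real.pi/2) Real.pi))
    (hΔlim1 : ∃ L : ℝ, Filter.Tendsto Δ (nhdsWithin (Real.pi/2) (Set.Iio (Real.pi/2))) (nhds L))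
    (hΔlim2 : ∃ L : ℝ, Filter.Tendsto Δ (nhdsWithin (Real.pi/2) (Set.Ioi (Real.pi/2))) (nhds L))
    (hΔnonneg : ∀ x ∈ Set.Ico (0:ℝ) (Real.pi/2) ∪ Set.Ioc (Real.pi/2) Real.pi, 0 ≤ Δ x)
    (hret1 : ∀ x ∈ Set.Ico (0:ℝ) (Real.pi/2), 0 ≤ x - Δ x)
    (hret2 : ∀ x ∈ Set.Ioc (Real.pi/2) Real.pi, Real.pi/2 ≤ x - Δ x)
    (w1 w1' w1'' : ℝ → ℝ → ℝ)
    (hw1d : ∀ lam : ℝ, 0 < lam → ∀ x ∈ Set.Icc (0:ℝ) (Real.pi/2),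
      HasDerivAt (w1 lam) (w1' lam x) x ∧ HasDerivAt (w1' lam) (w1'' lam x) x)
    (hw1eq : ∀ lam : ℝ, 0 < lam → ∀ x ∈ Set.Icc (0:ℝ) (Real.pi/2),
      p1^2 * w1'' lam x + q x * w1 lam (x - Δ x) + lam * w1 lam x = 0)
    (hw1ic : ∀ lam : ℝ, 0 < lam → w1 lam 0 = p1 ∧ w1' lam 0 = -Real.sqrt lam)
    :
    ∃ C : ℝ, 0 < C ∧ ∃ s0 : ℝ, 0 < s0 ∧ ∀ s : ℝ, s0 ≤ s → ∀ x ∈ Set.Icc (0:ℝ) (Real.pi/2),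
      |w1' (s^2) x + Real.sqrt 2 * s * Real.sin (s * x / p1 + Real.pi/4)| ≤ C :=
  stmt9_general p1 q Δ hp1 hqc1 hqlim1 hΔnonneg hret1 w1 w1' w1'' hw1d hw1eq hw1ic
end
end
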